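/- arXiv:2108.04905 — 2 statements merged into one kernel-verified Lean document; each statement's English description precedes it below -/
import Mathlib

section
/- If (𝔹, f, l) is a representation of H : [0,T]×ℝ^N×ℝ^N → ℝ, where 𝔹 is the closed unit ball of ℝ^{N+1}, and the functions f, l satisfy (R1)–(R3), then H satisfies condition (A). -/
open MeasureTheory Filter Set Topology
open scoped RealInnerProductSpace

noncomputable section

/-- `ℝ^n` with the Euclidean norm. -/
abbrev Euc (n : ℕ) : Type := EuclideanSpace ℝ (Fin n)

/-- (H1): continuity in all variables on `[0,T] × F × F`. -/
def CondH1 (T : ℝ) {F : Type} [NormedAddCommGroup F] [NormedSpace ℝ F]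
    (H : ℝ → F → F → ℝ) : Prop :=
  ContinuousOn (fun q : ℝ × F × F => H q.1 q.2.1 q.2.2) (Icc 0 T ×ˢ (univ : Set (F × F)))

/-- (H2): convexity in the gradient variable. -/
def CondH2 (T : ℝ) {F : Type} [NormedAddCommGroup F] [NormedSpace ℝ F]
    (H : ℝ → F → F → ℝ) : Prop :=
  ∀ t ∈ Icc (0:ℝ) T, ∀ x : F, ConvexOn ℝ univ (H t x)

/-- (H3): local Lipschitz continuity in the gradient variable. -/
def CondH3 (T : ℝ) {F : Type} [NormedAddCommGroup F] [NormedSpace ℝ F]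
    (H : ℝ → F → F → ℝ) : Prop :=
  ∀ R : ℝ, 0 ≤ R → ∃ C : ℝ, 0 ≤ C ∧ ∀ t ∈ Icc (0:ℝ) T, ∀ x : F, ‖x‖ ≤ R →
    ∀ p q : F, |H t x p - H t x q| ≤ C * ‖p - q‖

/-- (H4): sublinear Lipschitz bound in the gradient variable. -/
def CondH4 (T : ℝ) {F : Type} [NormedAddCommGroup F] [NormedSpace ℝ F]
    (H : ℝ → F → F → ℝ) : Prop :=
  ∃ c : ℝ → ℝ, IntegrableOn c (Icc 0 T) ∧ (∀ t, 0 ≤ c t) ∧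
    ∀ᵐ t ∂(volume.restrict (Icc (0:ℝ) T)), ∀ x p q : F,
      |H t x p - H t x q| ≤ c t * (1 + ‖x‖) * ‖p - q‖

/-- (H5): local Lipschitz continuity in the state variable. -/
def CondH5 (T : ℝ) {F : Type} [NormedAddCommGroup F] [NormedSpace ℝ F]
    (H : ℝ → F → F → ℝ) : Prop :=
  ∀ R : ℝ, 0 ≤ R → ∃ k : ℝ → ℝ, IntegrableOn k (Icc 0 T) ∧ (∀ t, 0 ≤ k t) ∧
    ∀ᵐ t ∂(volume.restrict (Icc (0:ℝ) T)), ∀ x y p : F, ‖x‖ ≤ R → ‖y‖ ≤ R →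
      |H t x p - H t y p| ≤ k t * (1 + ‖p‖) * ‖x - y‖

/-- Legendre–Fenchel conjugate of `H` in its gradient variable. -/
def LFconj {n : ℕ} (H : ℝ → Euc n → Euc n → ℝ) (t : ℝ) (x v : Euc n) : EReal :=
  ⨆ p : Euc n, ((⟪v, p⟫ - H t x p : ℝ) : EReal)

/-- Effective domain of an extended-real-valued function. -/
def edom {α : Type*} (φ : α → EReal) : Set α := { z | φ z ≠ ⊤ ∧ φ z ≠ ⊥ }

/-- Condition (A). -/
def CondA (T : ℝ) {n : ℕ} (H : ℝ → Euc n → Euc n → ℝ) : Prop :=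
  CondH1 T H ∧ CondH2 T H ∧ CondH3 T H ∧ CondH4 T H ∧ CondH5 T H ∧
  ∃ lam : ℝ → Euc n → ℝ,
    ContinuousOn (fun q : ℝ × Euc n => lam q.1 q.2) (Icc 0 T ×ˢ (univ : Set (Euc n))) ∧
    (∀ t ∈ Icc (0:ℝ) T, ∀ x : Euc n, 0 ≤ lam t x) ∧
    (∀ t ∈ Icc (0:ℝ) T, ∀ x : Euc n, ∀ v ∈ edom (LFconj H t x),
      ‖v‖ ≤ lam t x ∧ |(LFconj H t x v).toReal| ≤ lam t x) ∧
    (∀ R : ℝ, 0 ≤ R → ∃ ζ : ℝ → ℝ, IntegrableOn ζ (Icc 0 T) ∧ (∀ t, 0 ≤ ζ t) ∧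
      ∀ᵐ t ∂(volume.restrict (Icc (0:ℝ) T)), ∀ x y : Euc n, ‖x‖ ≤ R → ‖y‖ ≤ R →
        |lam t x - lam t y| ≤ ζ t * ‖x - y‖) ∧
    (∃ θ : ℝ → ℝ, IntegrableOn θ (Icc 0 T) ∧ (∀ t, 0 ≤ θ t) ∧
      ∀ᵐ t ∂(volume.restrict (Icc (0:ℝ) T)), ∀ x : Euc n, lam t x ≤ θ t * (1 + ‖x‖))

/-- Condition (B): existence of a positively homogeneous extension `H̄`. -/
def CondB (T : ℝ) {n : ℕ} (H : ℝ → Euc n → Euc n → ℝ) : Prop :=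
  ∃ Hb : ℝ → Euc n × ℝ → Euc n × ℝ → ℝ,
    (∀ t ∈ Icc (0:ℝ) T, ∀ X P : Euc n × ℝ, ∀ s : ℝ, 0 ≤ s →
      Hb t X (s • P) = s * Hb t X P) ∧
    (∀ t ∈ Icc (0:ℝ) T, ∀ x : Euc n, ∀ r : ℝ, ∀ p : Euc n,
      Hb t (x, r) (p, -1) = H t x p) ∧
    CondH1 T Hb ∧ CondH2 T Hb ∧ CondH3 T Hb ∧ CondH4 T Hb ∧ CondH5 T Hb

/-- Convexity for extended-real-valued functions. -/
def EConvex {F : Type} [AddCommMonoid F] [Module ℝ F] (φ : F → EReal) : Prop :=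
  ∀ v w : F, ∀ a b : ℝ, 0 ≤ a → 0 ≤ b → a + b = 1 →
    φ (a • v + b • w) ≤ (a : EReal) * φ v + (b : EReal) * φ w

/-- Properness for extended-real-valued functions. -/
def EProper {F : Type*} (φ : F → EReal) : Prop := (∀ v, φ v ≠ ⊥) ∧ ∃ v, φ v ≠ ⊤

/-- (L1): lower semicontinuity in all variables. -/
def CondL1 (T : ℝ) {n : ℕ} (L : ℝ → Euc n → Euc n → EReal) : Prop :=
  LowerSemicontinuousOn (fun q : ℝ × Euc n × Euc n => L q.1 q.2.1 q.2.2)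
    (Icc 0 T ×ˢ (univ : Set (Euc n × Euc n)))

/-- (L2): convexity and properness in the velocity variable. -/
def CondL2 (T : ℝ) {n : ℕ} (L : ℝ → Euc n → Euc n → EReal) : Prop :=
  ∀ t ∈ Icc (0:ℝ) T, ∀ x : Euc n, EConvex (L t x) ∧ EProper (L t x)

/-- (L3): lower semicontinuity is attained along sequences. -/
def CondL3 (T : ℝ) {n : ℕ} (L : ℝ → Euc n → Euc n → EReal) : Prop :=
  ∀ t ∈ Icc (0:ℝ) T, ∀ x v : Euc n, ∀ tm : ℕ → ℝ, ∀ xm : ℕ → Euc n,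
    (∀ m, tm m ∈ Icc (0:ℝ) T) →
    Tendsto (fun m => ((tm m, xm m) : ℝ × Euc n)) atTop (nhds (t, x)) →
    ∃ vm : ℕ → Euc n, Tendsto vm atTop (nhds v) ∧
      Tendsto (fun m => L (tm m) (xm m) (vm m)) atTop (nhds (L t x v))

/-- (L4): locally bounded effective domains. -/
def CondL4 (T : ℝ) {n : ℕ} (L : ℝ → Euc n → Euc n → EReal) : Prop :=
  ∀ R : ℝ, 0 ≤ R → ∃ C : ℝ, 0 ≤ C ∧ ∀ t ∈ Icc (0:ℝ) T, ∀ x : Euc n, ‖x‖ ≤ R →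
    ∀ v : Euc n, C < ‖v‖ → L t x v = ⊤

/-- (L5): sublinear bound on effective domains. -/
def CondL5 (T : ℝ) {n : ℕ} (L : ℝ → Euc n → Euc n → EReal) : Prop :=
  ∃ c : ℝ → ℝ, IntegrableOn c (Icc 0 T) ∧ (∀ t, 0 ≤ c t) ∧
    ∀ᵐ t ∂(volume.restrict (Icc (0:ℝ) T)), ∀ x v : Euc n,
      c t * (1 + ‖x‖) < ‖v‖ → L t x v = ⊤

/-- (L6): lower Lipschitz-type continuity in the state variable. -/
def CondL6 (T : ℝ) {n : ℕ} (L : ℝ → Euc n → Euc n → EReal) : Prop :=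
  ∀ R : ℝ, 0 ≤ R → ∃ k : ℝ → ℝ, IntegrableOn k (Icc 0 T) ∧ (∀ t, 0 ≤ k t) ∧
    ∀ᵐ t ∂(volume.restrict (Icc (0:ℝ) T)), ∀ x y : Euc n, ‖x‖ ≤ R → ‖y‖ ≤ R →
      ∀ v ∈ edom (L t x), ∃ w ∈ edom (L t y),
        ‖w - v‖ ≤ k t * ‖y - x‖ ∧ L t y w ≤ L t x v + ((k t * ‖y - x‖ : ℝ) : EReal)

/-- The set-valued map `Q(t,x) = {(v,η) : (v,-η) ∈ epi L(t,x,·)}`. -/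
def Qmap {n : ℕ} (L : ℝ → Euc n → Euc n → EReal) (t : ℝ) (x : Euc n) :
    Set (Euc n × ℝ) :=
  { ve | L t x ve.1 ≤ ((-ve.2 : ℝ) : EReal) }

/-- (Q6): Lipschitz-type continuity of `Q` in the state variable. -/
def CondQ6 (T : ℝ) {n : ℕ} (L : ℝ → Euc n → Euc n → EReal) : Prop :=
  ∀ R : ℝ, 0 ≤ R → ∃ k : ℝ → ℝ, IntegrableOn k (Icc 0 T) ∧ (∀ t, 0 ≤ k t) ∧
    ∀ᵐ t ∂(volume.restrict (Icc (0:ℝ) T)), ∀ x y : Euc n, ‖x‖ ≤ R → ‖y‖ ≤ R →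
      ∀ w ∈ Qmap L t x, ∃ z ∈ Qmap L t y,
        ‖w.1 - z.1‖ ≤ k t * ‖x - y‖ ∧ |w.2 - z.2| ≤ k t * ‖x - y‖

/-- The closed unit ball of `ℝ^n`. -/
def unitBall (n : ℕ) : Set (Euc n) := Metric.closedBall 0 1

/-- `(A,f,l)` is a representation of the Hamiltonian `H`. -/
def IsRepresentation (T : ℝ) {n : ℕ} (H : ℝ → Euc n → Euc n → ℝ)
    (A : Set (Euc (n+1))) (f : ℝ → Euc n → Euc (n+1) → Euc n)
    (l : ℝ → Euc n → Euc (n+1) → ℝ) : Prop :=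
  ∀ t ∈ Icc (0:ℝ) T, ∀ x p : Euc n,
    IsLUB { r : ℝ | ∃ a ∈ A, r = ⟪p, f t x a⟫ - l t x a } (H t x p)

/-- (R1): continuity of the representation data. -/
def CondR1 (T : ℝ) {n : ℕ} (f : ℝ → Euc n → Euc (n+1) → Euc n)
    (l : ℝ → Euc n → Euc (n+1) → ℝ) : Prop :=
  ContinuousOn (fun q : ℝ × Euc n × Euc (n+1) => f q.1 q.2.1 q.2.2)
    (Icc 0 T ×ˢ ((univ : Set (Euc n)) ×ˢ unitBall (n+1))) ∧
  ContinuousOn (fun q : ℝ × Euc n × Euc (n+1) => l q.1 q.2.1 q.2.2)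
    (Icc 0 T ×ˢ ((univ : Set (Euc n)) ×ˢ unitBall (n+1)))

/-- (R2): local Lipschitz continuity of the representation data in the state variable. -/
def CondR2 (T : ℝ) {n : ℕ} (f : ℝ → Euc n → Euc (n+1) → Euc n)
    (l : ℝ → Euc n → Euc (n+1) → ℝ) : Prop :=
  ∀ R : ℝ, 0 ≤ R → ∃ K : ℝ → ℝ, IntegrableOn K (Icc 0 T) ∧ (∀ t, 0 ≤ K t) ∧
    ∀ᵐ t ∂(volume.restrict (Icc (0:ℝ) T)), ∀ x y : Euc n, ∀ a ∈ unitBall (n+1),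
      ‖x‖ ≤ R → ‖y‖ ≤ R →
      ‖f t x a - f t y a‖ + |l t x a - l t y a| ≤ K t * ‖x - y‖

/-- (R3): sublinear growth of the representation data. -/
def CondR3 (T : ℝ) {n : ℕ} (f : ℝ → Euc n → Euc (n+1) → Euc n)
    (l : ℝ → Euc n → Euc (n+1) → ℝ) : Prop :=
  ∃ C : ℝ → ℝ, IntegrableOn C (Icc 0 T) ∧ (∀ t, 0 ≤ C t) ∧
    ∀ᵐ t ∂(volume.restrict (Icc (0:ℝ) T)), ∀ x : Euc n, ∀ a ∈ unitBall (n+1),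
      ‖f t x a‖ + |l t x a| ≤ C t * (1 + ‖x‖)

/-- Absolute continuity of `x` on `[a,b]`, with a.e. derivative `x'`. -/
def AbsCont {F : Type} [NormedAddCommGroup F] [NormedSpace ℝ F]
    (x x' : ℝ → F) (a b : ℝ) : Prop :=
  IntegrableOn x' (Icc a b) ∧
  (∀ᵐ t ∂(volume.restrict (Icc a b)), HasDerivWithinAt x (x' t) (Icc a b) t) ∧
  ∀ t ∈ Icc a b, x t = x a + ∫ s in a..t, x' s

-- The value function of the calculus of variations problem with data `L`, `g`.
open Classical in
def valueFun {n : ℕ} (T : ℝ) (L : ℝ → Euc n → Euc n → EReal) (g : Euc n → EReal)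
    (p : ℝ × Euc n) : EReal :=
  if p.1 = T then g p.2
  else if p.1 ∈ Ico (0:ℝ) T then
    sInf { r : EReal | ∃ x x' : ℝ → Euc n, ∃ ℓ : ℝ → ℝ,
      AbsCont x x' p.1 T ∧ x p.1 = p.2 ∧ IntegrableOn ℓ (Icc p.1 T) ∧
      (∀ᵐ t ∂(volume.restrict (Icc p.1 T)), L t (x t) (x' t) = ((ℓ t : ℝ) : EReal)) ∧
      r = g (x T) + ((∫ t in Icc p.1 T, ℓ t : ℝ) : EReal) }
  else ⊤

/-- The subderivative `dφ(z)(w) = liminf_{τ→0+, y→w} (φ(z+τy) − φ(z))/τ`. -/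
def subderivAt {F : Type} [AddCommGroup F] [Module ℝ F] [TopologicalSpace F]
    (φ : F → EReal) (z : F) (w : F) : EReal :=
  Filter.liminf (fun q : ℝ × F => (((q.1)⁻¹ : ℝ) : EReal) * (φ (z + q.1 • q.2) - φ z))
    ((nhdsWithin (0:ℝ) (Ioi 0)) ×ˢ nhds w)

/-- The subdifferential of `φ : [0,T]×ℝ^n → ℝ∪{±∞}` at `z`. -/
def subdiff {n : ℕ} (φ : ℝ × Euc n → EReal) (z : ℝ × Euc n) : Set (ℝ × Euc n) :=
  { p | ∀ w : ℝ × Euc n, ((w.1 * p.1 + ⟪w.2, p.2⟫ : ℝ) : EReal) ≤ subderivAt φ z w }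

/-- `U` is a lower semicontinuous solution of `-U_t + H(t,x,-U_x) = 0`, `U(T,·) = g`. -/
def LscSolution (T : ℝ) {n : ℕ} (H : ℝ → Euc n → Euc n → ℝ) (g : Euc n → EReal)
    (U : ℝ × Euc n → EReal) : Prop :=
  LowerSemicontinuous U ∧ (∀ p : ℝ × Euc n, U p ≠ ⊥) ∧
  (∀ p : ℝ × Euc n, p.1 ∉ Icc (0:ℝ) T → U p = ⊤) ∧
  (∀ x : Euc n, U (T, x) = g x) ∧
  ∀ t : ℝ, ∀ x : Euc n, (t, x) ∈ edom U → ∀ p ∈ subdiff U (t, x),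
    (t ∈ Ico (0:ℝ) T → 0 ≤ -p.1 + H t x (-p.2)) ∧
    (t ∈ Ioc (0:ℝ) T → -p.1 + H t x (-p.2) ≤ 0)

/-- Epigraph of `U : ℝ × ℝ^n → ℝ∪{±∞}`. -/
def epiE {n : ℕ} (U : ℝ × Euc n → EReal) : Set ((ℝ × Euc n) × ℝ) :=
  { q | U q.1 ≤ (q.2 : EReal) }

/-- The tangent cone to `S` at `w`. -/
def tangentConeE {F : Type} [NormedAddCommGroup F] [NormedSpace ℝ F]
    (S : Set F) (w : F) : Set F :=
  { ζ | Filter.liminf (fun τ : ℝ => ((Metric.infDist (w + τ • ζ) S / τ : ℝ) : EReal))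
      (nhdsWithin (0:ℝ) (Ioi 0)) = 0 }

/-- The Euclidean pairing on `(ℝ × ℝ^n) × ℝ`. -/
def pairE {n : ℕ} (a b : (ℝ × Euc n) × ℝ) : ℝ :=
  a.1.1 * b.1.1 + ⟪a.1.2, b.1.2⟫ + a.2 * b.2

/-- The normal cone to `S` at `w`, by polarity with the tangent cone. -/
def normalConeE {n : ℕ} (S : Set ((ℝ × Euc n) × ℝ)) (w : (ℝ × Euc n) × ℝ) :
    Set ((ℝ × Euc n) × ℝ) :=
  { ξ | ∀ ζ ∈ tangentConeE S w, pairE ζ ξ ≤ 0 }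

section CondAHelpers

variable {α : Type*}

lemma lub_le_of_forall {A : Set α} {u : α → ℝ} {h b : ℝ}
    (H : IsLUB {r : ℝ | ∃ a ∈ A, r = u a} h) (hb : ∀ a ∈ A, u a ≤ b) : h ≤ b :=
  H.2 (by rintro r ⟨a, ha, rfl⟩; exact hb a ha)

lemma le_lub {A : Set α} {u : α → ℝ} {h : ℝ}
    (H : IsLUB {r : ℝ | ∃ a ∈ A, r = u a} h) {a : α} (ha : a ∈ A) : u a ≤ h :=
  H.1 ⟨a, ha, rfl⟩

lemma repSet_eq (A : Set α) (u : α → ℝ) : {r : ℝ | ∃ a ∈ A, r = u a} = u '' A := by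
  ext r
  constructor
  · rintro ⟨a, ha, rfl⟩; exact ⟨a, ha, rfl⟩
  · rintro ⟨a, ha, rfl⟩; exact ⟨a, ha, rfl⟩

lemma continuousOn_sSup_compact {γ β : Type*} [TopologicalSpace γ] [TopologicalSpace β]
    {g : γ → β → ℝ} {s : Set γ} {K : Set β} (hK : IsCompact K)
    (hg : ContinuousOn (fun q : γ × β => g q.1 q.2) (s ×ˢ K)) :
    ContinuousOn (fun x => sSup (g x '' K)) s := by
  rw [continuousOn_iff_continuous_restrict]
  have : CompactSpace K := isCompact_iff_compactSpace.mp hK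
  have h1 : Continuous fun q : s × K => g (q.1 : γ) (q.2 : β) :=
    hg.comp_continuous (f := fun q : s × K => ((q.1 : γ), (q.2 : β)))
      (by fun_prop) (fun q => ⟨q.1.2, q.2.2⟩)
  have h2 : Continuous fun x : s => sSup ((fun y : K => g (x : γ) (y : β)) '' univ) :=
    IsCompact.continuous_sSup (K := (univ : Set K)) isCompact_univ h1
  refine h2.congr fun x => ?_
  congr 1
  rw [image_univ]
  exact (Set.image_eq_range _ _).symm

end CondAHelpers

/-- **Theorem 3.2.** If `(𝔹, f, l)` is a representation of `H` with `f`, `l`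
satisfying (R1)–(R3), then `H` satisfies condition (A). -/
theorem condA_of_representation (T : ℝ) (hT : 0 < T) (N : ℕ)
    (H : ℝ → Euc N → Euc N → ℝ)
    (f : ℝ → Euc N → Euc (N+1) → Euc N) (l : ℝ → Euc N → Euc (N+1) → ℝ)
    (hrep : IsRepresentation T H (unitBall (N+1)) f l)
    (hR1 : CondR1 T f l) (hR2 : CondR2 T f l) (hR3 : CondR3 T f l) :
    CondA T H := by
  classical
  obtain ⟨hf1, hl1⟩ := hR1
  have cptB : IsCompact (unitBall (N+1)) := isCompact_closedBall 0 1
  have mem0 : (0 : Euc (N+1)) ∈ unitBall (N+1) := by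
    simp [unitBall]
  have fc : ∀ t ∈ Icc (0:ℝ) T, ∀ x : Euc N,
      ContinuousOn (fun a => f t x a) (unitBall (N+1)) ∧
      ContinuousOn (fun a => l t x a) (unitBall (N+1)) := by
    intro t ht x
    have hmap : ∀ a ∈ unitBall (N+1),
        ((t, x, a) : ℝ × Euc N × Euc (N+1)) ∈
          Icc 0 T ×ˢ ((univ : Set (Euc N)) ×ˢ unitBall (N+1)) :=
      fun a ha => ⟨ht, trivial, ha⟩
    have hcm : Continuous fun a : Euc (N+1) => ((t, x, a) : ℝ × Euc N × Euc (N+1)) := by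
      fun_prop
    exact ⟨hf1.comp hcm.continuousOn hmap, hl1.comp hcm.continuousOn hmap⟩
  set glam : ℝ → Euc N → Euc (N+1) → ℝ := fun t x a => ‖f t x a‖ + |l t x a| with hglam
  set lam : ℝ → Euc N → ℝ := fun t x => sSup (glam t x '' unitBall (N+1)) with hlamdef
  have bddA : ∀ t ∈ Icc (0:ℝ) T, ∀ x : Euc N, BddAbove (glam t x '' unitBall (N+1)) := by
    intro t ht x
    exact (cptB.image_of_continuousOn (((fc t ht x).1.norm).add ((fc t ht x).2.abs))).bddAbove
  have keyf : ∀ t ∈ Icc (0:ℝ) T, ∀ x : Euc N, ∀ a ∈ unitBall (N+1), ‖f t x a‖ ≤ lam t x := by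
    intro t ht x a ha
    exact le_trans (le_add_of_nonneg_right (abs_nonneg _)) (le_csSup (bddA t ht x) ⟨a, ha, rfl⟩)
  have keyl : ∀ t ∈ Icc (0:ℝ) T, ∀ x : Euc N, ∀ a ∈ unitBall (N+1), |l t x a| ≤ lam t x := by
    intro t ht x a ha
    exact le_trans (le_add_of_nonneg_left (norm_nonneg _)) (le_csSup (bddA t ht x) ⟨a, ha, rfl⟩)
  have lamnn : ∀ t ∈ Icc (0:ℝ) T, ∀ x : Euc N, 0 ≤ lam t x :=
    fun t ht x => (norm_nonneg (f t x 0)).trans (keyf t ht x 0 mem0)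
  refine ⟨?_, ?_, ?_, ?_, ?_, lam, ?_, lamnn, ?_, ?_, ?_⟩
  · -- (H1)
    have hcont : ContinuousOn
        (fun q : (ℝ × Euc N × Euc N) × Euc (N+1) =>
          (⟪q.1.2.2, f q.1.1 q.1.2.1 q.2⟫ - l q.1.1 q.1.2.1 q.2 : ℝ))
        ((Icc 0 T ×ˢ (univ : Set (Euc N × Euc N))) ×ˢ unitBall (N+1)) := by
      have hπ : Continuous fun q : (ℝ × Euc N × Euc N) × Euc (N+1) =>
          ((q.1.1, q.1.2.1, q.2) : ℝ × Euc N × Euc (N+1)) := by fun_prop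
      have hmap : MapsTo (fun q : (ℝ × Euc N × Euc N) × Euc (N+1) =>
            ((q.1.1, q.1.2.1, q.2) : ℝ × Euc N × Euc (N+1)))
          ((Icc 0 T ×ˢ (univ : Set (Euc N × Euc N))) ×ˢ unitBall (N+1))
          (Icc 0 T ×ˢ ((univ : Set (Euc N)) ×ˢ unitBall (N+1))) :=
        fun q hq => ⟨hq.1.1, trivial, hq.2⟩
      exact ((continuous_fst.snd.snd.continuousOn).inner
        (hf1.comp hπ.continuousOn hmap)).sub (hl1.comp hπ.continuousOn hmap)
    have hc2 := continuousOn_sSup_compact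
      (g := fun (q : ℝ × Euc N × Euc N) (a : Euc (N+1)) =>
        (⟪q.2.2, f q.1 q.2.1 a⟫ - l q.1 q.2.1 a : ℝ)) cptB hcont
    refine hc2.congr ?_
    intro q hq
    show H q.1 q.2.1 q.2.2 =
      sSup ((fun a : Euc (N+1) => (⟪q.2.2, f q.1 q.2.1 a⟫ - l q.1 q.2.1 a : ℝ)) '' unitBall (N+1))
    rw [← repSet_eq]
    exact ((hrep q.1 hq.1 q.2.1 q.2.2).csSup_eq ⟨_, 0, mem0, rfl⟩).symm
  · -- (H2)
    intro t ht x
    refine ⟨convex_univ, ?_⟩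
    intro p _ q _ a b ha hb hab
    refine lub_le_of_forall (hrep t ht x (a • p + b • q)) ?_
    intro w hw
    have heq1 : ⟪a • p + b • q, f t x w⟫ - l t x w
        = a * (⟪p, f t x w⟫ - l t x w) + b * (⟪q, f t x w⟫ - l t x w) := by
      rw [inner_add_left, real_inner_smul_left, real_inner_smul_left]
      linear_combination (l t x w) * hab
    rw [heq1, smul_eq_mul, smul_eq_mul]
    exact add_le_add (mul_le_mul_of_nonneg_left (le_lub (hrep t ht x p) hw) ha)
      (mul_le_mul_of_nonneg_left (le_lub (hrep t ht x q) hw) hb)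
  · -- (H3)
    intro R hR
    obtain ⟨C, hC⟩ := (isCompact_Icc.prod ((isCompact_closedBall (0:Euc N) R).prod
        cptB)).exists_bound_of_continuousOn
      (hf1.mono (prod_mono subset_rfl (prod_mono (subset_univ _) subset_rfl)))
    refine ⟨max C 0, le_max_right _ _, ?_⟩
    intro t ht x hx p q
    have key : ∀ p q : Euc N, H t x p - H t x q ≤ max C 0 * ‖p - q‖ := by
      intro p q
      rw [sub_le_iff_le_add]
      refine lub_le_of_forall (hrep t ht x p) ?_
      intro a ha
      have hfb : ‖f t x a‖ ≤ max C 0 := by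
        refine le_trans (hC (t, x, a) ⟨ht, ?_, ha⟩) (le_max_left _ _)
        simpa [Metric.mem_closedBall, dist_eq_norm] using hx
      have h4 : ⟪p - q, f t x a⟫ ≤ max C 0 * ‖p - q‖ := by
        calc ⟪p - q, f t x a⟫ ≤ ‖p - q‖ * ‖f t x a‖ := real_inner_le_norm _ _
          _ ≤ ‖p - q‖ * _ := mul_le_mul_of_nonneg_left hfb (norm_nonneg _)
          _ = _ := mul_comm _ _
      have h5 : ⟪q, f t x a⟫ - l t x a ≤ H t x q := le_lub (hrep t ht x q) ha
      have h6 : ⟪p, f t x a⟫ - ⟪q, f t x a⟫ = ⟪p - q, f t x a⟫ := by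
        rw [inner_sub_left]
      linarith
    refine abs_sub_le_iff.mpr ⟨key p q, ?_⟩
    have := key q p
    rwa [norm_sub_rev] at this
  · -- (H4)
    obtain ⟨C, hCi, hCnn, hCae⟩ := hR3
    refine ⟨C, hCi, hCnn, ?_⟩
    filter_upwards [hCae, ae_restrict_mem measurableSet_Icc] with t hCt ht
    intro x p q
    have key : ∀ p q : Euc N, H t x p - H t x q ≤ C t * (1 + ‖x‖) * ‖p - q‖ := by
      intro p q
      rw [sub_le_iff_le_add]
      refine lub_le_of_forall (hrep t ht x p) ?_
      intro a ha
      have hfb : ‖f t x a‖ ≤ C t * (1 + ‖x‖) := by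
        have := hCt x a ha
        have h0 := abs_nonneg (l t x a)
        linarith
      have h4 : ⟪p - q, f t x a⟫ ≤ C t * (1 + ‖x‖) * ‖p - q‖ := by
        calc ⟪p - q, f t x a⟫ ≤ ‖p - q‖ * ‖f t x a‖ := real_inner_le_norm _ _
          _ ≤ ‖p - q‖ * _ := mul_le_mul_of_nonneg_left hfb (norm_nonneg _)
          _ = _ := mul_comm _ _
      have h5 : ⟪q, f t x a⟫ - l t x a ≤ H t x q := le_lub (hrep t ht x q) ha
      have h6 : ⟪p, f t x a⟫ - ⟪q, f t x a⟫ = ⟪p - q, f t x a⟫ := by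
        rw [inner_sub_left]
      linarith
    refine abs_sub_le_iff.mpr ⟨key p q, ?_⟩
    have := key q p
    rwa [norm_sub_rev] at this
  · -- (H5)
    intro R hR
    obtain ⟨K, hKi, hKnn, hKae⟩ := hR2 R hR
    refine ⟨K, hKi, hKnn, ?_⟩
    filter_upwards [hKae, ae_restrict_mem measurableSet_Icc] with t hKt ht
    have key : ∀ x y p : Euc N, ‖x‖ ≤ R → ‖y‖ ≤ R →
        H t x p - H t y p ≤ K t * (1 + ‖p‖) * ‖x - y‖ := by
      intro x y p hx hy
      rw [sub_le_iff_le_add]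
      refine lub_le_of_forall (hrep t ht x p) ?_
      intro a ha
      have hb := hKt x y a ha hx hy
      have h5 : ⟪p, f t y a⟫ - l t y a ≤ H t y p := le_lub (hrep t ht y p) ha
      have e1 : ⟪p, f t x a⟫ - ⟪p, f t y a⟫ ≤ ‖p‖ * ‖f t x a - f t y a‖ := by
        rw [← inner_sub_right]
        exact real_inner_le_norm _ _
      have e2 : l t y a - l t x a ≤ |l t x a - l t y a| := by
        rw [abs_sub_comm]
        exact le_abs_self _
      nlinarith [norm_nonneg p, norm_nonneg (f t x a - f t y a),
        abs_nonneg (l t x a - l t y a), hKnn t, norm_nonneg (x - y),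
        mul_le_mul_of_nonneg_left hb (by positivity : (0:ℝ) ≤ 1 + ‖p‖)]
    intro x y p hx hy
    refine abs_sub_le_iff.mpr ⟨key x y p hx hy, ?_⟩
    have := key y x p hy hx
    rwa [norm_sub_rev] at this
  · -- continuity of lam
    have hcont : ContinuousOn
        (fun q : (ℝ × Euc N) × Euc (N+1) => (‖f q.1.1 q.1.2 q.2‖ + |l q.1.1 q.1.2 q.2| : ℝ))
        ((Icc 0 T ×ˢ (univ : Set (Euc N))) ×ˢ unitBall (N+1)) := by
      have hπ : Continuous fun q : (ℝ × Euc N) × Euc (N+1) =>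
          ((q.1.1, q.1.2, q.2) : ℝ × Euc N × Euc (N+1)) := by fun_prop
      have hmap : MapsTo (fun q : (ℝ × Euc N) × Euc (N+1) =>
            ((q.1.1, q.1.2, q.2) : ℝ × Euc N × Euc (N+1)))
          ((Icc 0 T ×ˢ (univ : Set (Euc N))) ×ˢ unitBall (N+1))
          (Icc 0 T ×ˢ ((univ : Set (Euc N)) ×ˢ unitBall (N+1))) :=
        fun q hq => ⟨hq.1.1, trivial, hq.2⟩
      exact ((hf1.comp hπ.continuousOn hmap).norm).add ((hl1.comp hπ.continuousOn hmap).abs)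
    exact continuousOn_sSup_compact
      (g := fun (q : ℝ × Euc N) (a : Euc (N+1)) => (‖f q.1 q.2 a‖ + |l q.1 q.2 a| : ℝ))
      cptB hcont
  · -- bounds on the effective domain of the conjugate
    intro t ht x v hv
    set S : Set (Euc N) := f t x '' unitBall (N+1) with hS
    set K : Set (Euc N) := closure (convexHull ℝ S) with hK
    have hKconv : Convex ℝ K := (convex_convexHull ℝ S).closure
    have hKcl : IsClosed K := isClosed_closure
    have hSK : S ⊆ K := (subset_convexHull ℝ S).trans subset_closure
    have hvK : v ∈ K := by
      by_contra hvK
      obtain ⟨φ, u, hu1, hu2⟩ := geometric_hahn_banach_closed_point hKconv hKcl hvK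
      set p : Euc N := (InnerProductSpace.toDual ℝ (Euc N)).symm φ with hp
      have hpw : ∀ w : Euc N, ⟪p, w⟫ = φ w := fun w => InnerProductSpace.toDual_symm_apply
      have htop : LFconj H t x v = ⊤ := by
        rw [LFconj, iSup_eq_top]
        intro b hb
        induction b using EReal.rec with
        | bot => exact ⟨0, EReal.bot_lt_coe _⟩
        | top => exact absurd hb (lt_irrefl _)
        | coe r =>
          set δ : ℝ := φ v - u with hδ
          have hδpos : 0 < δ := sub_pos.mpr hu2
          set s : ℝ := max 0 ((r + 1 + lam t x) / δ) with hs
          have hs0 : 0 ≤ s := le_max_left _ _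
          have hsδ : r + 1 + lam t x ≤ s * δ := by
            have h1 : r + 1 + lam t x = ((r + 1 + lam t x) / δ) * δ := by
              field_simp
            rw [h1]
            exact mul_le_mul_of_nonneg_right (le_max_right _ _) hδpos.le
          refine ⟨s • p, ?_⟩
          have hH : H t x (s • p) ≤ s * u + lam t x := by
            refine lub_le_of_forall (hrep t ht x (s • p)) ?_
            intro a ha
            have h1 : ⟪s • p, f t x a⟫ = s * φ (f t x a) := by
              rw [real_inner_smul_left, hpw]
            have h2 : φ (f t x a) ≤ u := (hu1 _ (hSK ⟨a, ha, rfl⟩)).le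
            have h3 : -l t x a ≤ lam t x := (neg_le_abs _).trans (keyl t ht x a ha)
            have h4 : s * φ (f t x a) ≤ s * u := mul_le_mul_of_nonneg_left h2 hs0
            rw [h1]
            linarith
          have hterm : r < ⟪v, s • p⟫ - H t x (s • p) := by
            have h4 : ⟪v, s • p⟫ = s * φ v := by
              rw [real_inner_smul_right, real_inner_comm, hpw]
            have h5 : s * φ v - s * u = s * δ := by ring
            rw [h4]
            linarith
          exact_mod_cast EReal.coe_lt_coe_iff.mpr hterm
      exact hv.1 htop
    constructor
    · -- norm bound
      have hsub : K ⊆ Metric.closedBall 0 (lam t x) := by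
        refine closure_minimal (convexHull_min ?_ (convex_closedBall 0 _))
          Metric.isClosed_closedBall
        rintro w ⟨a, ha, rfl⟩
        rw [mem_closedBall_zero_iff]
        exact keyf t ht x a ha
      simpa [mem_closedBall_zero_iff] using hsub hvK
    · -- value bound
      have hub : LFconj H t x v ≤ ((lam t x : ℝ) : EReal) := by
        rw [LFconj]
        refine iSup_le ?_
        intro p
        refine EReal.coe_le_coe_iff.mpr ?_
        have hhalf : K ⊆ {w : Euc N | ⟪w, p⟫ ≤ lam t x + H t x p} := by
          refine closure_minimal (convexHull_min ?_ ?_) ?_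
          · rintro w ⟨a, ha, rfl⟩
            have h1 : ⟪p, f t x a⟫ - l t x a ≤ H t x p := le_lub (hrep t ht x p) ha
            have h2 : l t x a ≤ lam t x := (le_abs_self _).trans (keyl t ht x a ha)
            have h3 : ⟪f t x a, p⟫ = ⟪p, f t x a⟫ := real_inner_comm _ _
            rw [mem_setOf_eq, h3]
            linarith
          · exact convex_halfSpace_le
              ⟨fun a b => inner_add_left a b p, fun c a => real_inner_smul_left a p c⟩ _
          · exact isClosed_le (continuous_id.inner continuous_const) continuous_const
        have := hhalf hvK
        rw [mem_setOf_eq] at this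
        linarith
      have hlb : ((-(lam t x) : ℝ) : EReal) ≤ LFconj H t x v := by
        have h0 : H t x 0 ≤ lam t x := by
          refine lub_le_of_forall (hrep t ht x 0) ?_
          intro a ha
          have h1 : -l t x a ≤ lam t x := (neg_le_abs _).trans (keyl t ht x a ha)
          rw [inner_zero_left]
          linarith
        calc ((-(lam t x) : ℝ) : EReal)
            ≤ ((⟪v, (0 : Euc N)⟫ - H t x 0 : ℝ) : EReal) := by
              refine EReal.coe_le_coe_iff.mpr ?_
              rw [inner_zero_right]
              linarith
          _ ≤ LFconj H t x v :=
              le_iSup (fun p : Euc N => ((⟪v, p⟫ - H t x p : ℝ) : EReal)) 0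
      rw [abs_le]
      constructor
      · have := EReal.toReal_le_toReal hlb (EReal.coe_ne_bot _) hv.1
        rwa [EReal.toReal_coe] at this
      · have := EReal.toReal_le_toReal hub hv.2 (EReal.coe_ne_top _)
        rwa [EReal.toReal_coe] at this
  · -- Lipschitz bound for lam
    intro R hR
    obtain ⟨K, hKi, hKnn, hKae⟩ := hR2 R hR
    refine ⟨K, hKi, hKnn, ?_⟩
    filter_upwards [hKae, ae_restrict_mem measurableSet_Icc] with t hKt ht
    have key : ∀ x y : Euc N, ‖x‖ ≤ R → ‖y‖ ≤ R →
        lam t x - lam t y ≤ K t * ‖x - y‖ := by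
      intro x y hx hy
      rw [sub_le_iff_le_add]
      refine csSup_le ⟨glam t x 0, 0, mem0, rfl⟩ ?_
      rintro r ⟨a, ha, rfl⟩
      have hb := hKt x y a ha hx hy
      have h2 : glam t y a ≤ lam t y := le_csSup (bddA t ht y) ⟨a, ha, rfl⟩
      have h3 : ‖f t x a‖ - ‖f t y a‖ ≤ ‖f t x a - f t y a‖ := norm_sub_norm_le _ _
      have h4 : |l t x a| - |l t y a| ≤ |l t x a - l t y a| := abs_sub_abs_le_abs_sub _ _
      simp only [hglam] at h2 ⊢
      linarith
    intro x y hx hy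
    refine abs_sub_le_iff.mpr ⟨key x y hx hy, ?_⟩
    have := key y x hy hx
    rwa [norm_sub_rev] at this
  · -- sublinear bound for lam
    obtain ⟨C, hCi, hCnn, hCae⟩ := hR3
    refine ⟨C, hCi, hCnn, ?_⟩
    filter_upwards [hCae, ae_restrict_mem measurableSet_Icc] with t hCt ht
    intro x
    refine csSup_le ⟨glam t x 0, 0, mem0, rfl⟩ ?_
    rintro r ⟨a, ha, rfl⟩
    exact hCt x a ha

end
end

section
/- Assume L satisfies (L1)–(L5) and g : ℝ^N → ℝ∪{+∞} is proper and lower semicontinuous. Let V be the value function associated with L and g. Then for every (t₀,x₀) ∈ dom V with t₀ ∈ [0,T) there exists v₀ ∈ ℝ^N such that dV(t₀,x₀)(1,v₀) ≤ −L(t₀,x₀,v₀). -/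
open MeasureTheory Filter Set Topology
open scoped RealInnerProductSpace

noncomputable section

lemma ereal_mul_le_mul_left (c : ℝ) (hc : 0 ≤ c) {a b : EReal} (h : a ≤ b) :
    (c : EReal) * a ≤ (c : EReal) * b :=
  mul_le_mul_of_nonneg_left h (by exact_mod_cast hc)

lemma ereal_S_le_neg {X S : EReal} (h : ∀ r : ℝ, (r : EReal) < X → S ≤ ((-r : ℝ) : EReal)) :
    S ≤ -X := by
  refine EReal.le_neg_of_le_neg ?_
  by_contra hc
  push_neg at hc
  obtain ⟨y, h1, h2⟩ := EReal.exists_between_coe_real hc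
  have h3 := h y h2
  rw [EReal.coe_neg] at h3
  exact absurd (EReal.le_neg_of_le_neg h3) (not_le.mpr h1)

lemma exists_affine_minorant {N : ℕ} (φ : Euc N → EReal)
    (hconv : EConvex φ) (hlsc : LowerSemicontinuous φ)
    (hbot : ∀ v, φ v ≠ ⊥) (hdom : ∃ v, φ v ≠ ⊤)
    (v₀ : Euc N) (r : ℝ) (hr : (r : EReal) < φ v₀) :
    ∃ (F : Euc N →L[ℝ] ℝ) (β : ℝ),
      (∀ v, ((F v + β : ℝ) : EReal) ≤ φ v) ∧ r < F v₀ + β := by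
  obtain ⟨v₁, hv₁⟩ := hdom
  set s₁ : ℝ := (φ v₁).toReal with hs₁
  have hφv₁ : φ v₁ = (s₁ : EReal) := (EReal.coe_toReal hv₁ (hbot v₁)).symm
  set epi : Set (Euc N × ℝ) := {q | φ q.1 ≤ (q.2 : EReal)} with hepi
  have hclosed : IsClosed epi := by
    have h1 : IsClosed {p : Euc N × EReal | φ p.1 ≤ p.2} := hlsc.isClosed_epigraph
    have h2 : epi = (fun q : Euc N × ℝ => (q.1, (q.2 : EReal))) ⁻¹' {p : Euc N × EReal | φ p.1 ≤ p.2} := rfl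
    rw [h2]
    exact h1.preimage (continuous_fst.prodMk (continuous_coe_real_ereal.comp continuous_snd))
  have hconvex : Convex ℝ epi := by
    rintro q1 h1 q2 h2 a b ha hb hab
    have key := hconv q1.1 q2.1 a b ha hb hab
    have m1 : (a : EReal) * φ q1.1 ≤ (a : EReal) * ((q1.2 : ℝ) : EReal) :=
      ereal_mul_le_mul_left a ha h1
    have m2 : (b : EReal) * φ q2.1 ≤ (b : EReal) * ((q2.2 : ℝ) : EReal) :=
      ereal_mul_le_mul_left b hb h2
    have : φ ((a • q1 + b • q2).1) ≤ (((a • q1 + b • q2).2 : ℝ) : EReal) := by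
      have hfst : (a • q1 + b • q2).1 = a • q1.1 + b • q2.1 := rfl
      have hsnd : ((a • q1 + b • q2).2 : ℝ) = a * q1.2 + b * q2.2 := rfl
      rw [hfst, hsnd]
      calc φ (a • q1.1 + b • q2.1) ≤ (a : EReal) * φ q1.1 + (b : EReal) * φ q2.1 := key
        _ ≤ (a : EReal) * ((q1.2 : ℝ) : EReal) + (b : EReal) * ((q2.2 : ℝ) : EReal) :=
          add_le_add m1 m2
        _ = ((a * q1.2 + b * q2.2 : ℝ) : EReal) := by
          rw [← EReal.coe_mul, ← EReal.coe_mul, ← EReal.coe_add]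
    exact this
  -- separation helper
  have key : ∀ w : Euc N, ∀ s : ℝ, (w, s) ∉ epi →
      ∃ (F₁ : Euc N →L[ℝ] ℝ) (c u : ℝ),
        (∀ v : Euc N, ∀ t : ℝ, φ v ≤ (t : EReal) → F₁ v + t * c < u) ∧
        u < F₁ w + s * c ∧ c ≤ 0 := by
    intro w s hws
    obtain ⟨f, u, hbelow, hpt⟩ := geometric_hahn_banach_closed_point hconvex hclosed hws
    set F₁ : Euc N →L[ℝ] ℝ := f.comp (ContinuousLinearMap.inl ℝ (Euc N) ℝ) with hF₁
    set c : ℝ := f (0, 1) with hc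
    have hdecomp : ∀ v : Euc N, ∀ t : ℝ, f (v, t) = F₁ v + t * c := by
      intro v t
      have h0 : (v, t) = (v, (0:ℝ)) + t • ((0 : Euc N), (1:ℝ)) := by
        simp [Prod.ext_iff]
      rw [h0, map_add, f.map_smul, smul_eq_mul]
      rfl
    have hbelow' : ∀ v : Euc N, ∀ t : ℝ, φ v ≤ (t : EReal) → F₁ v + t * c < u := by
      intro v t hvt
      have := hbelow (v, t) hvt
      rwa [hdecomp] at this
    have hpt' : u < F₁ w + s * c := by
      have := hpt
      rwa [hdecomp] at this
    refine ⟨F₁, c, u, hbelow', hpt', ?_⟩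
    by_contra hcpos
    push_neg at hcpos
    -- c > 0 : contradiction using (v₁, s₁ + k) ∈ epi
    set k : ℝ := max 0 ((u - F₁ v₁ - s₁ * c) / c) with hk
    have hk1 : (u - F₁ v₁ - s₁ * c) / c ≤ k := le_max_right _ _
    have hmem : φ v₁ ≤ ((s₁ + k : ℝ) : EReal) := by
      rw [hφv₁]
      exact_mod_cast le_add_of_nonneg_right (le_max_left _ _)
    have h2 := hbelow' v₁ (s₁ + k) hmem
    have h3 : u - F₁ v₁ - s₁ * c ≤ k * c := by
      have := mul_le_mul_of_nonneg_right hk1 hcpos.le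
      rwa [div_mul_cancel₀ _ (ne_of_gt hcpos)] at this
    nlinarith
  -- builder : from a separating functional with c < 0, build an affine minorant
  have build : ∀ (F₁ : Euc N →L[ℝ] ℝ) (c u : ℝ), c < 0 →
      (∀ v : Euc N, ∀ t : ℝ, φ v ≤ (t : EReal) → F₁ v + t * c < u) →
      ∃ (F : Euc N →L[ℝ] ℝ) (β : ℝ),
        (∀ v, ((F v + β : ℝ) : EReal) ≤ φ v) ∧
        (∀ v : Euc N, ∀ t : ℝ, φ v ≤ (t : EReal) → F v + β ≤ t) ∧
        (∀ w : Euc N, ∀ s : ℝ, u < F₁ w + s * c → s < F w + β) := by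
    intro F₁ c u hclt hbelow
    set d : ℝ := -c with hd
    have hdpos : 0 < d := by simp [hd]; linarith
    refine ⟨d⁻¹ • F₁, -u / d, ?_, ?_, ?_⟩
    · intro v
      by_cases hv : φ v = ⊤
      · rw [hv]; exact le_top
      · have hveq : φ v = (((φ v).toReal : ℝ) : EReal) := (EReal.coe_toReal hv (hbot v)).symm
        set t : ℝ := (φ v).toReal
        have h1 := hbelow v t (le_of_eq hveq)
        have h2 : d⁻¹ * F₁ v + -u / d ≤ t := by
          have he : d⁻¹ * F₁ v + -u / d = (F₁ v - u) / d := by field_simp; ring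
          rw [he, div_le_iff₀ hdpos, hd]
          nlinarith
        rw [hveq]
        apply EReal.coe_le_coe_iff.mpr
        simpa [ContinuousLinearMap.smul_apply, smul_eq_mul] using h2
    · intro v t hvt
      have h1 := hbelow v t hvt
      have h2 : d⁻¹ * F₁ v + -u / d ≤ t := by
        have he : d⁻¹ * F₁ v + -u / d = (F₁ v - u) / d := by field_simp; ring
        rw [he, div_le_iff₀ hdpos, hd]
        nlinarith
      simpa [ContinuousLinearMap.smul_apply, smul_eq_mul] using h2
    · intro w s hws
      have h2 : s < d⁻¹ * F₁ w + -u / d := by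
        have he : d⁻¹ * F₁ w + -u / d = (F₁ w - u) / d := by field_simp; ring
        rw [he, lt_div_iff₀ hdpos, hd]
        nlinarith
      simpa [ContinuousLinearMap.smul_apply, smul_eq_mul] using h2
  -- main separation at (v₀, r)
  have hnotmem : (v₀, r) ∉ epi := by
    intro hmem
    exact absurd hmem (not_le.mpr hr)
  obtain ⟨F₁, c, u, hbelow, hpt, hc0⟩ := key v₀ r hnotmem
  rcases hc0.lt_or_eq with hclt | hceq
  · obtain ⟨F, β, hmin, _, hval⟩ := build F₁ c u hclt hbelow
    exact ⟨F, β, hmin, hval v₀ r hpt⟩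
  · -- c = 0 : vertical separation; combine with a basic affine minorant
    subst hceq
    simp only [mul_zero, add_zero] at hbelow hpt
    -- get a basic minorant
    have hnm2 : (v₁, s₁ - 1) ∉ epi := by
      intro hmem
      rw [hepi] at hmem
      have : φ v₁ ≤ ((s₁ - 1 : ℝ) : EReal) := hmem
      rw [hφv₁] at this
      have := EReal.coe_le_coe_iff.mp this
      linarith
    obtain ⟨F₂, c₂, u₂, hbelow₂, hpt₂, hc₂0⟩ := key v₁ (s₁ - 1) hnm2
    have hc₂lt : c₂ < 0 := by
      rcases hc₂0.lt_or_eq with h | h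
      · exact h
      · exfalso
        subst h
        simp only [mul_zero, add_zero] at hbelow₂ hpt₂
        have := hbelow₂ v₁ s₁ (le_of_eq hφv₁)
        linarith
    obtain ⟨F', β', hmin', hle', _⟩ := build F₂ c₂ u₂ hc₂lt hbelow₂
    set D : ℝ := F₁ v₀ - u with hD
    have hDpos : 0 < D := by simp [hD]; linarith
    set k : ℝ := max 0 ((r - (F' v₀ + β')) / D) + 1 with hk
    have hkpos : 0 < k := by positivity
    have hkgt : (r - (F' v₀ + β')) / D < k := by
      calc (r - (F' v₀ + β')) / D ≤ max 0 ((r - (F' v₀ + β')) / D) := le_max_right _ _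
        _ < k := by rw [hk]; linarith
    refine ⟨F' + k • F₁, β' - k * u, ?_, ?_⟩
    · intro v
      by_cases hv : φ v = ⊤
      · rw [hv]; exact le_top
      · have hveq : φ v = (((φ v).toReal : ℝ) : EReal) := (EReal.coe_toReal hv (hbot v)).symm
        set t : ℝ := (φ v).toReal
        have h1 : F' v + β' ≤ t := hle' v t (le_of_eq hveq)
        have h2 : F₁ v < u := hbelow v t (le_of_eq hveq)
        have h3 : (F' + k • F₁) v + (β' - k * u) ≤ t := by
          simp only [ContinuousLinearMap.add_apply, ContinuousLinearMap.smul_apply, smul_eq_mul]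
          nlinarith
        rw [hveq]
        exact EReal.coe_le_coe_iff.mpr h3
    · have h4 : r - (F' v₀ + β') < k * D := by
        have := (div_lt_iff₀ hDpos).mp hkgt
        linarith
      simp only [ContinuousLinearMap.add_apply, ContinuousLinearMap.smul_apply, smul_eq_mul]
      nlinarith

lemma uniform_lsc_minorant {T : ℝ} {N : ℕ} {L : ℝ → Euc N → Euc N → EReal}
    (hL1 : CondL1 T L) {t₀ : ℝ} (ht₀ : t₀ ∈ Icc (0:ℝ) T) (x₀ : Euc N)
    (C : ℝ) (F : Euc N →L[ℝ] ℝ) (β δ : ℝ) (hδ : 0 < δ)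
    (hmin : ∀ v : Euc N, ‖v‖ ≤ C → ((F v + β : ℝ) : EReal) ≤ L t₀ x₀ v) :
    ∃ η : ℝ, 0 < η ∧ ∀ t ∈ Icc (0:ℝ) T, ∀ x v : Euc N,
      |t - t₀| < η → ‖x - x₀‖ < η → ‖v‖ ≤ C →
      ((F v + β - δ : ℝ) : EReal) ≤ L t x v := by
  set s : Set (ℝ × Euc N × Euc N) := Icc 0 T ×ˢ (univ : Set (Euc N × Euc N)) with hs
  set K : Set (ℝ × Euc N × Euc N) :=
    ({t₀} : Set ℝ) ×ˢ (({x₀} : Set (Euc N)) ×ˢ Metric.closedBall (0 : Euc N) C) with hK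
  have hKcompact : IsCompact K :=
    isCompact_singleton.prod (isCompact_singleton.prod (isCompact_closedBall _ _))
  have hO : ∀ p ∈ K, ∃ O : Set (ℝ × Euc N × Euc N), IsOpen O ∧ p ∈ O ∧
      ∀ q ∈ O, q ∈ s → ((F q.2.2 + β - δ : ℝ) : EReal) < L q.1 q.2.1 q.2.2 := by
    rintro ⟨t₁, x₁, v₁⟩ hp
    have hpK : t₁ = t₀ ∧ x₁ = x₀ ∧ ‖v₁‖ ≤ C := by
      simp only [hK, mem_prod, mem_singleton_iff, Metric.mem_closedBall,
        dist_zero_right] at hp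
      exact ⟨hp.1, hp.2.1, hp.2.2⟩
    obtain ⟨rfl, rfl, hv₁⟩ := hpK
    have hpmem : ((t₁, x₁, v₁) : ℝ × Euc N × Euc N) ∈ s := by
      simp [hs, ht₀]
    have hlt : ((F v₁ + β - δ/2 : ℝ) : EReal) < L t₁ x₁ v₁ :=
      lt_of_lt_of_le (by exact_mod_cast (by linarith : F v₁ + β - δ/2 < F v₁ + β))
        (hmin v₁ hv₁)
    have hev := hL1 _ hpmem _ hlt
    rw [eventually_nhdsWithin_iff] at hev
    obtain ⟨W, hWsub, hWopen, hWmem⟩ := mem_nhds_iff.mp hev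
    set U₂ : Set (ℝ × Euc N × Euc N) :=
      (fun q : ℝ × Euc N × Euc N => F q.2.2) ⁻¹' Iio (F v₁ + δ/2) with hU₂
    have hU₂open : IsOpen U₂ :=
      (F.continuous.comp (continuous_snd.comp continuous_snd)).isOpen_preimage _ isOpen_Iio
    refine ⟨W ∩ U₂, hWopen.inter hU₂open, ⟨hWmem, by simp [hU₂, hδ]⟩, ?_⟩
    rintro ⟨t, x, v⟩ ⟨hqW, hqU₂⟩ hqs
    have h1 : ((F v₁ + β - δ/2 : ℝ) : EReal) < L t x v := hWsub hqW hqs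
    have h2 : F v < F v₁ + δ/2 := hqU₂
    refine lt_of_le_of_lt ?_ h1
    exact_mod_cast (by linarith : F v + β - δ ≤ F v₁ + β - δ/2)
  choose! O hOopen hOmem hOprop using hO
  set Ω : Set (ℝ × Euc N × Euc N) := ⋃ p ∈ K, O p with hΩ
  have hΩopen : IsOpen Ω := isOpen_biUnion hOopen
  have hKΩ : K ⊆ Ω := fun p hp => mem_biUnion hp (hOmem p hp)
  obtain ⟨η, hηpos, hηsub⟩ := hKcompact.exists_thickening_subset_open hΩopen hKΩ
  refine ⟨η, hηpos, ?_⟩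
  intro t ht x v hdt hdx hv
  have hqK : ((t, x, v) : ℝ × Euc N × Euc N) ∈ Metric.thickening η K := by
    rw [Metric.mem_thickening_iff]
    refine ⟨(t₀, x₀, v), by simp [hK, hv], ?_⟩
    simp only [Prod.dist_eq, dist_self]
    rw [Real.dist_eq, dist_eq_norm]
    simp only [max_lt_iff]
    exact ⟨hdt, hdx, hηpos⟩
  have hqΩ : ((t, x, v) : ℝ × Euc N × Euc N) ∈ Ω := hηsub hqK
  obtain ⟨p, hpK, hqO⟩ := mem_iUnion₂.mp hqΩ
  have hqs : ((t, x, v) : ℝ × Euc N × Euc N) ∈ s := by simp [hs, ht]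
  exact le_of_lt (hOprop p hpK (t, x, v) hqO hqs)

lemma traj_bounds {T : ℝ} {N : ℕ} {L : ℝ → Euc N → Euc N → EReal}
    {x x' : ℝ → Euc N} {ℓ : ℝ → ℝ} {t₀ : ℝ} {x₀ : Euc N}
    (ht₀0 : 0 ≤ t₀) (ht₀T : t₀ ≤ T)
    (hAC : AbsCont x x' t₀ T) (hx0 : x t₀ = x₀)
    (hae : ∀ᵐ t ∂(volume.restrict (Icc t₀ T)), L t (x t) (x' t) = ((ℓ t : ℝ) : EReal))
    {C : ℝ} (hC : 0 ≤ C)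
    (hC4 : ∀ t ∈ Icc (0:ℝ) T, ∀ y : Euc N, ‖y‖ ≤ ‖x₀‖ + 1 → ∀ v : Euc N,
      C < ‖v‖ → L t y v = ⊤)
    {b : ℝ} (hb : t₀ ≤ b) (hbT : b ≤ T) (hbsmall : b - t₀ ≤ (2*(C+1))⁻¹) :
    (∀ t ∈ Icc t₀ b, ‖x t - x₀‖ ≤ C * (t - t₀)) ∧
    (∀ᵐ t ∂(volume.restrict (Icc t₀ b)), ‖x' t‖ ≤ C) := by
  have hint : IntegrableOn x' (Icc t₀ T) := hAC.1
  have hcont : ContinuousOn x (Icc t₀ T) := by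
    have h1 : ContinuousOn (fun t => ∫ u in Ioc t₀ t, x' u) (Icc t₀ T) :=
      intervalIntegral.continuousOn_primitive hint
    have h2 : ContinuousOn (fun t => x₀ + ∫ u in Ioc t₀ t, x' u) (Icc t₀ T) :=
      continuousOn_const.add h1
    refine h2.congr ?_
    intro t ht
    rw [hAC.2.2 t ht, hx0, intervalIntegral.integral_of_le ht.1]
  have haeP : ∀ᵐ t ∂(volume.restrict (Icc t₀ T)),
      t ∈ Icc t₀ T ∧ L t (x t) (x' t) = ((ℓ t : ℝ) : EReal) :=
    (ae_restrict_mem measurableSet_Icc).and hae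
  have hvel : ∀ t, t ∈ Icc t₀ T → L t (x t) (x' t) = ((ℓ t : ℝ) : EReal) →
      ‖x t - x₀‖ ≤ 1 → ‖x' t‖ ≤ C := by
    intro t ht hL hx1
    by_contra hgt
    push_neg at hgt
    have hxb : ‖x t‖ ≤ ‖x₀‖ + 1 := by
      have h1 : ‖x t‖ - ‖x₀‖ ≤ ‖x t - x₀‖ := norm_sub_norm_le _ _
      linarith
    have htT : t ∈ Icc (0:ℝ) T := ⟨le_trans ht₀0 ht.1, ht.2⟩
    have h2 := hC4 t htT (x t) hxb (x' t) hgt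
    rw [hL] at h2
    exact EReal.coe_ne_top _ h2
  have hest : ∀ u ∈ Icc t₀ b, (∀ s ∈ Ico t₀ u, ‖x s - x₀‖ < 1) →
      ‖x u - x₀‖ ≤ C * (u - t₀) := by
    intro u hu hsmall
    have hu0 : t₀ ≤ u := hu.1
    have huT : u ≤ T := le_trans hu.2 hbT
    have hxu : x u - x₀ = ∫ s in Icc t₀ u, x' s := by
      rw [hAC.2.2 u ⟨hu0, huT⟩, hx0, intervalIntegral.integral_of_le hu0,
        ← integral_Icc_eq_integral_Ioc]
      abel
    have haesub : ∀ᵐ s ∂(volume.restrict (Icc t₀ u)), ‖x' s‖ ≤ C := by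
      have h1 : ∀ᵐ s ∂(volume.restrict (Icc t₀ u)),
          s ∈ Icc t₀ T ∧ L s (x s) (x' s) = ((ℓ s : ℝ) : EReal) :=
        haeP.filter_mono (ae_mono (Measure.restrict_mono (Icc_subset_Icc le_rfl huT) le_rfl))
      have h2 : ∀ᵐ s ∂(volume.restrict (Icc t₀ u)), s ∈ Icc t₀ u :=
        ae_restrict_mem measurableSet_Icc
      have h3 : ∀ᵐ s ∂(volume.restrict (Icc t₀ u)), s ≠ u := by
        rw [ae_iff]
        refine measure_mono_null (fun s hs => ?_) (?_ : (volume.restrict (Icc t₀ u)) {u} = 0)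
        · simp only [mem_setOf_eq, not_not] at hs
          exact hs ▸ rfl
        · exact le_antisymm (le_trans (Measure.restrict_le_self _) (by simp)) zero_le
      filter_upwards [h1, h2, h3] with s hs1 hs2 hs3
      apply hvel s hs1.1 hs1.2
      exact le_of_lt (hsmall s ⟨hs2.1, lt_of_le_of_ne hs2.2 hs3⟩)
    have hintu : IntegrableOn x' (Icc t₀ u) := hint.mono_set (Icc_subset_Icc le_rfl huT)
    calc ‖x u - x₀‖ = ‖∫ s in Icc t₀ u, x' s‖ := by rw [hxu]
      _ ≤ ∫ s in Icc t₀ u, ‖x' s‖ := norm_integral_le_integral_norm _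
      _ ≤ ∫ _ in Icc t₀ u, C :=
        integral_mono_ae hintu.norm (integrableOn_const measure_Icc_lt_top.ne) haesub
      _ = C * (u - t₀) := by
        rw [setIntegral_const, smul_eq_mul, Real.volume_real_Icc_of_le (by linarith : t₀ ≤ u), mul_comm]
  have hball : ∀ t ∈ Icc t₀ b, ‖x t - x₀‖ < 1 := by
    by_contra hcon
    push_neg at hcon
    obtain ⟨t₂, ht₂, hge⟩ := hcon
    set B : Set ℝ := {t ∈ Icc t₀ b | 1 ≤ ‖x t - x₀‖} with hB
    have hBne : B.Nonempty := ⟨t₂, ht₂, hge⟩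
    have hBclosed : IsClosed B := by
      have hc : ContinuousOn (fun t => ‖x t - x₀‖) (Icc t₀ b) :=
        ((hcont.mono (Icc_subset_Icc le_rfl hbT)).sub continuousOn_const).norm
      have : B = Icc t₀ b ∩ (fun t => ‖x t - x₀‖) ⁻¹' (Ici 1) := by
        ext t; simp [hB, and_comm]
      rw [this]
      exact hc.preimage_isClosed_of_isClosed isClosed_Icc isClosed_Ici
    have hBbdd : BddBelow B := ⟨t₀, fun t ht => ht.1.1⟩
    have huB : sInf B ∈ B := hBclosed.csInf_mem hBne hBbdd
    set u := sInf B with hu_def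
    have hu : u ∈ Icc t₀ b := huB.1
    have hsmall : ∀ s ∈ Ico t₀ u, ‖x s - x₀‖ < 1 := by
      intro s hsm
      by_contra hc2
      push_neg at hc2
      have hsB : s ∈ B := ⟨⟨hsm.1, le_trans (le_of_lt hsm.2) hu.2⟩, hc2⟩
      exact absurd (csInf_le hBbdd hsB) (not_le.mpr hsm.2)
    have hub := hest u hu hsmall
    have h1 : C * (u - t₀) ≤ C * (2*(C+1))⁻¹ := by
      apply mul_le_mul_of_nonneg_left _ hC
      have := hu.2
      linarith
    have h2 : C * (2*(C+1))⁻¹ < 1 := by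
      rw [← div_eq_mul_inv]
      exact (div_lt_one (by positivity)).mpr (by linarith)
    have := huB.2
    linarith
  constructor
  · intro t ht
    exact hest t ht (fun s hs => hball s ⟨hs.1, le_trans (le_of_lt hs.2) ht.2⟩)
  · have h1 : ∀ᵐ s ∂(volume.restrict (Icc t₀ b)),
        s ∈ Icc t₀ T ∧ L s (x s) (x' s) = ((ℓ s : ℝ) : EReal) :=
      haeP.filter_mono (ae_mono (Measure.restrict_mono (Icc_subset_Icc le_rfl hbT) le_rfl))
    have h2 : ∀ᵐ s ∂(volume.restrict (Icc t₀ b)), s ∈ Icc t₀ b :=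
      ae_restrict_mem measurableSet_Icc
    filter_upwards [h1, h2] with s hs1 hs2
    exact hvel s hs1.1 hs1.2 (le_of_lt (hball s hs2))

lemma slice_lsc {T : ℝ} {N : ℕ} {L : ℝ → Euc N → Euc N → EReal} (hL1 : CondL1 T L)
    {t₀ : ℝ} (ht₀ : t₀ ∈ Icc (0:ℝ) T) (x₀ : Euc N) :
    LowerSemicontinuous (fun v => L t₀ x₀ v) := by
  intro v y hy
  have hmem : ((t₀, x₀, v) : ℝ × Euc N × Euc N) ∈ Icc 0 T ×ˢ (univ : Set (Euc N × Euc N)) := by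
    simp [ht₀]
  have hev := hL1 _ hmem y hy
  have hten : Tendsto (fun v' : Euc N => ((t₀, x₀, v') : ℝ × Euc N × Euc N)) (nhds v)
      (nhdsWithin (t₀, x₀, v) (Icc 0 T ×ˢ (univ : Set (Euc N × Euc N)))) := by
    rw [tendsto_nhdsWithin_iff]
    exact ⟨(continuous_const.prodMk (continuous_const.prodMk continuous_id)).tendsto v,
      Eventually.of_forall (fun v' => by simp [ht₀])⟩
  exact hten.eventually hev

lemma liminf_le_along {F : Type} [AddCommGroup F] [Module ℝ F] [TopologicalSpace F]
    (φ : F → EReal) (z : F) (w : F) (τ : ℕ → ℝ) (y : ℕ → F)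
    (hτ : Tendsto τ atTop (nhdsWithin 0 (Ioi 0))) (hy : Tendsto y atTop (nhds w))
    {c : EReal}
    (hbound : ∀ᶠ k in atTop, (((τ k)⁻¹ : ℝ) : EReal) * (φ (z + (τ k) • y k) - φ z) ≤ c) :
    subderivAt φ z w ≤ c := by
  set u : ℝ × F → EReal := fun q => (((q.1)⁻¹ : ℝ) : EReal) * (φ (z + q.1 • q.2) - φ z) with hu
  have hmap : Tendsto (fun k => ((τ k, y k) : ℝ × F)) atTop
      ((nhdsWithin (0:ℝ) (Ioi 0)) ×ˢ nhds w) := hτ.prodMk hy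
  have h1 : subderivAt φ z w ≤ liminf u (Filter.map (fun k => ((τ k, y k) : ℝ × F)) atTop) :=
    liminf_le_liminf_of_le hmap
  have h2 : liminf u (Filter.map (fun k => ((τ k, y k) : ℝ × F)) atTop) =
      liminf (fun k => u (τ k, y k)) atTop := by
    rw [← Filter.liminf_comp]
    rfl
  refine le_trans h1 ?_
  rw [h2]
  exact liminf_le_of_frequently_le' hbound.frequently

lemma AbsCont.restrict {F : Type} [NormedAddCommGroup F] [NormedSpace ℝ F]
    {x x' : ℝ → F} {a b c : ℝ} (h : AbsCont x x' a c) (hab : a ≤ b) (hbc : b ≤ c) :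
    AbsCont x x' b c := by
  obtain ⟨hint, hder, hform⟩ := h
  refine ⟨hint.mono_set (Icc_subset_Icc hab le_rfl), ?_, ?_⟩
  · have h1 : ∀ᵐ t ∂(volume.restrict (Icc b c)), HasDerivWithinAt x (x' t) (Icc a c) t :=
      hder.filter_mono (ae_mono (Measure.restrict_mono (Icc_subset_Icc hab le_rfl) le_rfl))
    filter_upwards [h1] with t ht
    exact ht.mono (Icc_subset_Icc hab le_rfl)
  · intro t ht
    have h1 := hform t ⟨le_trans hab ht.1, ht.2⟩
    have h2 := hform b ⟨hab, hbc⟩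
    rw [h1, h2]
    have h3 : IntervalIntegrable x' volume a t :=
      (intervalIntegrable_iff_integrableOn_Icc_of_le (le_trans hab ht.1)).mpr
        (hint.mono_set (Icc_subset_Icc le_rfl ht.2))
    have h4 : IntervalIntegrable x' volume a b :=
      (intervalIntegrable_iff_integrableOn_Icc_of_le hab).mpr
        (hint.mono_set (Icc_subset_Icc le_rfl hbc))
    have := intervalIntegral.integral_interval_sub_left h3 h4
    rw [← this]
    abel

lemma integral_Icc_split {f : ℝ → ℝ} {a b c : ℝ} (hab : a ≤ b) (hbc : b ≤ c)
    (hint : IntegrableOn f (Icc a c)) :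
    ∫ t in Icc a c, f t = (∫ t in Icc a b, f t) + ∫ t in Icc b c, f t := by
  have hsplit : Icc a c = Icc a b ∪ Ioc b c := (Icc_union_Ioc_eq_Icc hab hbc).symm
  have hdisj : Disjoint (Icc a b) (Ioc b c) := by
    rw [Set.disjoint_left]
    intro t ht1 ht2
    exact absurd ht1.2 (not_le.mpr ht2.1)
  rw [hsplit, setIntegral_union hdisj measurableSet_Ioc
    (hint.mono_set (hsplit ▸ subset_union_left))
    (hint.mono_set (hsplit ▸ subset_union_right)), ← integral_Icc_eq_integral_Ioc]

lemma valueFun_eq {N : ℕ} (T : ℝ) (L : ℝ → Euc N → Euc N → EReal) (g : Euc N → EReal)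
    {a : ℝ} (ha : a ∈ Ico (0:ℝ) T) (y : Euc N) :
    valueFun T L g (a, y) = sInf { r : EReal | ∃ x x' : ℝ → Euc N, ∃ ℓ : ℝ → ℝ,
      AbsCont x x' a T ∧ x a = y ∧ IntegrableOn ℓ (Icc a T) ∧
      (∀ᵐ t ∂(volume.restrict (Icc a T)), L t (x t) (x' t) = ((ℓ t : ℝ) : EReal)) ∧
      r = g (x T) + ((∫ t in Icc a T, ℓ t : ℝ) : EReal) } := by
  unfold valueFun
  rw [if_neg (ne_of_lt ha.2), if_pos ha]

/-- **Theorem 5.2.** Subderivative inequality for the value function in a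
forward direction. -/
theorem value_function_forward_subderivative (T : ℝ) (hT : 0 < T) (N : ℕ)
    (L : ℝ → Euc N → Euc N → EReal)
    (hL1 : CondL1 T L) (hL2 : CondL2 T L) (hL3 : CondL3 T L)
    (hL4 : CondL4 T L) (hL5 : CondL5 T L)
    (g : Euc N → EReal) (hgprop : EProper g) (hglsc : LowerSemicontinuous g) :
    ∀ t₀ : ℝ, ∀ x₀ : Euc N, (t₀, x₀) ∈ edom (valueFun T L g) → t₀ ∈ Ico (0:ℝ) T →
      ∃ v₀ : Euc N,
        subderivAt (valueFun T L g) (t₀, x₀) ((1 : ℝ), v₀) ≤ -(L t₀ x₀ v₀) := by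
  intro t₀ x₀ hdom ht₀
  have ht₀T : t₀ < T := ht₀.2
  have ht₀0 : 0 ≤ t₀ := ht₀.1
  have ht₀Icc : t₀ ∈ Icc (0:ℝ) T := ⟨ht₀0, le_of_lt ht₀T⟩
  have hVne_top : valueFun T L g (t₀, x₀) ≠ ⊤ := hdom.1
  have hVne_bot : valueFun T L g (t₀, x₀) ≠ ⊥ := hdom.2
  set V₀ : ℝ := (valueFun T L g (t₀, x₀)).toReal with hV₀def
  have hV₀ : valueFun T L g (t₀, x₀) = (V₀ : EReal) :=
    (EReal.coe_toReal hVne_top hVne_bot).symm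
  have hVval : valueFun T L g (t₀, x₀) = sInf { r : EReal | ∃ x x' : ℝ → Euc N, ∃ ℓ : ℝ → ℝ,
      AbsCont x x' t₀ T ∧ x t₀ = x₀ ∧ IntegrableOn ℓ (Icc t₀ T) ∧
      (∀ᵐ t ∂(volume.restrict (Icc t₀ T)), L t (x t) (x' t) = ((ℓ t : ℝ) : EReal)) ∧
      r = g (x T) + ((∫ t in Icc t₀ T, ℓ t : ℝ) : EReal) } := valueFun_eq T L g ht₀ x₀
  -- constants from (L4)
  obtain ⟨C, hC0, hC4⟩ := hL4 (‖x₀‖ + 1) (by positivity)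
  set b : ℝ := min T (t₀ + (2*(C+1))⁻¹) with hb_def
  have hinvpos : 0 < (2*(C+1))⁻¹ := by positivity
  have hbpos : t₀ < b := lt_min ht₀T (by linarith)
  have hbT : b ≤ T := min_le_left _ _
  have hbsmall : b - t₀ ≤ (2*(C+1))⁻¹ := by
    have := min_le_right T (t₀ + (2*(C+1))⁻¹)
    have h2 : b ≤ t₀ + (2*(C+1))⁻¹ := this
    linarith
  -- the time steps
  set τ : ℕ → ℝ := fun n => (b - t₀) / ((n : ℝ) + 2) with hτ_def
  have hτpos : ∀ n, 0 < τ n := fun n => div_pos (by linarith) (by positivity)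
  have hτle : ∀ n, τ n ≤ b - t₀ := fun n =>
    div_le_self (by linarith) (by have := Nat.cast_nonneg (α := ℝ) n; linarith)
  have hτhalf : ∀ n, τ n ≤ (b - t₀)/2 := fun n =>
    div_le_div_of_nonneg_left (by linarith) (by norm_num) (by norm_num)
  have hτlt : ∀ n, t₀ + τ n < T := by
    intro n
    have h1 := hτhalf n
    have : t₀ + (b - t₀)/2 < b := by linarith
    linarith
  have hτ0 : Tendsto τ atTop (nhdsWithin 0 (Ioi 0)) := by
    rw [tendsto_nhdsWithin_iff]
    constructor
    · exact Tendsto.div_atTop tendsto_const_nhds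
        (tendsto_atTop_add_const_right _ 2 tendsto_natCast_atTop_atTop)
    · exact Eventually.of_forall (fun n => hτpos n)
  -- near-optimal trajectories
  have hsel : ∀ n : ℕ, ∃ r ∈ { r : EReal | ∃ x x' : ℝ → Euc N, ∃ ℓ : ℝ → ℝ,
      AbsCont x x' t₀ T ∧ x t₀ = x₀ ∧ IntegrableOn ℓ (Icc t₀ T) ∧
      (∀ᵐ t ∂(volume.restrict (Icc t₀ T)), L t (x t) (x' t) = ((ℓ t : ℝ) : EReal)) ∧
      r = g (x T) + ((∫ t in Icc t₀ T, ℓ t : ℝ) : EReal) },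
      r < ((V₀ + (τ n)^2 : ℝ) : EReal) := by
    intro n
    apply sInf_lt_iff.mp
    rw [← hVval, hV₀]
    exact_mod_cast (by nlinarith [hτpos n] : V₀ < V₀ + (τ n)^2)
  choose r hrS hrlt using hsel
  choose X X' ℓf hACn hx0n hintn haen hreqn using hrS
  -- a priori bounds
  have hbounds : ∀ n, (∀ t ∈ Icc t₀ b, ‖X n t - x₀‖ ≤ C * (t - t₀)) ∧
      (∀ᵐ t ∂(volume.restrict (Icc t₀ b)), ‖X' n t‖ ≤ C) := fun n =>
    traj_bounds ht₀0 (le_of_lt ht₀T) (hACn n) (hx0n n) (haen n) hC0 hC4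
      (le_of_lt hbpos) hbT hbsmall
  -- average velocities
  set v : ℕ → Euc N := fun n => (τ n)⁻¹ • (X n (t₀ + τ n) - x₀) with hv_def
  have hsmem : ∀ n, t₀ + τ n ∈ Icc t₀ b :=
    fun n => ⟨by linarith [hτpos n], by linarith [hτle n]⟩
  have hτvn : ∀ n, (τ n) • v n = X n (t₀ + τ n) - x₀ :=
    fun n => smul_inv_smul₀ (ne_of_gt (hτpos n)) _
  have hvball : ∀ n, v n ∈ Metric.closedBall (0 : Euc N) C := by
    intro n
    rw [mem_closedBall_zero_iff]
    have h1 : ‖X n (t₀ + τ n) - x₀‖ ≤ C * (t₀ + τ n - t₀) := (hbounds n).1 _ (hsmem n)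
    have h2 : ‖v n‖ = (τ n)⁻¹ * ‖X n (t₀ + τ n) - x₀‖ := by
      rw [hv_def]
      simp only [norm_smul, Real.norm_eq_abs, abs_of_pos (inv_pos.mpr (hτpos n))]
    rw [h2]
    have h3 : (τ n)⁻¹ * ‖X n (t₀ + τ n) - x₀‖ ≤ (τ n)⁻¹ * (C * (τ n)) := by
      apply mul_le_mul_of_nonneg_left _ (inv_nonneg.mpr (le_of_lt (hτpos n)))
      simpa using h1
    refine le_trans h3 ?_
    rw [mul_comm C (τ n), ← mul_assoc, inv_mul_cancel₀ (ne_of_gt (hτpos n)), one_mul]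
  obtain ⟨v₀, hv₀mem, ψ, hψmono, hψtend⟩ :=
    (isCompact_closedBall (0 : Euc N) C).tendsto_subseq hvball
  refine ⟨v₀, ?_⟩
  apply ereal_S_le_neg
  intro ρ hρ
  obtain ⟨ρ', hρρ', hρ'X⟩ := EReal.exists_between_coe_real hρ
  have hρρ'r : ρ < ρ' := by exact_mod_cast hρρ'
  set δ : ℝ := (ρ' - ρ)/2 with hδ_def
  have hδpos : 0 < δ := by rw [hδ_def]; linarith
  -- affine minorant of L t₀ x₀ ·
  obtain ⟨F, β, hmino, hval⟩ := exists_affine_minorant (fun w => L t₀ x₀ w)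
    (hL2 t₀ ht₀Icc x₀).1 (slice_lsc hL1 ht₀Icc x₀)
    (hL2 t₀ ht₀Icc x₀).2.1 (hL2 t₀ ht₀Icc x₀).2.2 v₀ ρ' hρ'X
  -- uniform lower semicontinuity
  obtain ⟨η, hηpos, hη⟩ := uniform_lsc_minorant hL1 ht₀Icc x₀ C F β δ hδpos
    (fun w _ => hmino w)
  -- the key estimate
  have hkey : ∀ n, τ n < η → C * τ n < η →
      (((τ n)⁻¹ : ℝ) : EReal) *
        (valueFun T L g ((t₀, x₀) + (τ n) • ((1:ℝ), v n)) - valueFun T L g (t₀, x₀)) ≤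
      ((τ n - (F (v n) + β) + δ : ℝ) : EReal) := by
    intro n hτη hCτη
    have hτpos' : 0 < τ n := hτpos n
    set s : ℝ := t₀ + τ n with hs_def
    have hsb : s ∈ Icc t₀ b := hsmem n
    have hsT : s < T := hτlt n
    have hs0 : 0 ≤ s := by have := hτpos n; rw [hs_def]; linarith
    have hsIco : s ∈ Ico (0:ℝ) T := ⟨hs0, hsT⟩
    have hsT' : s ≤ T := le_of_lt hsT
    have hpt : (t₀, x₀) + (τ n) • ((1:ℝ), v n) = (s, X n s) := by
      have h1 : (τ n) • v n = X n s - x₀ := hτvn n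
      rw [Prod.ext_iff]
      constructor
      · show t₀ + (τ n) • (1:ℝ) = s
        rw [smul_eq_mul, mul_one]
      · show x₀ + (τ n) • v n = X n s
        rw [h1]
        abel
    -- g (X n T) is finite
    have hrn_lt : r n < ((V₀ + (τ n)^2 : ℝ) : EReal) := hrlt n
    have hrn_ne_top : r n ≠ ⊤ := (lt_of_lt_of_le hrn_lt le_top).ne
    have hgtop : g (X n T) ≠ ⊤ := by
      intro h
      apply hrn_ne_top
      rw [hreqn n, h, EReal.top_add_coe]
    have hgbot : g (X n T) ≠ ⊥ := hgprop.1 (X n T)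
    set G : ℝ := (g (X n T)).toReal with hGdef
    have hgeq : g (X n T) = (G : EReal) := (EReal.coe_toReal hgtop hgbot).symm
    -- splitting the integral
    set J : ℝ := ∫ t in Icc t₀ s, ℓf n t with hJdef
    set I₂ : ℝ := ∫ t in Icc s T, ℓf n t with hI₂def
    have hsplit : ∫ t in Icc t₀ T, ℓf n t = J + I₂ :=
      integral_Icc_split hsb.1 hsT' (hintn n)
    have hrval : r n = ((G + (J + I₂) : ℝ) : EReal) := by
      rw [hreqn n, hgeq, hsplit, ← EReal.coe_add]
    have hreal : G + (J + I₂) < V₀ + (τ n)^2 := by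
      have h1 := hrn_lt
      rw [hrval] at h1
      exact_mod_cast h1
    -- dynamic programming : value at the later point
    have hVs : valueFun T L g (s, X n s) ≤ ((G + I₂ : ℝ) : EReal) := by
      rw [valueFun_eq T L g hsIco (X n s)]
      apply sInf_le
      refine ⟨X n, X' n, ℓf n, (hACn n).restrict hsb.1 hsT', rfl,
        (hintn n).mono_set (Icc_subset_Icc hsb.1 le_rfl),
        (haen n).filter_mono
          (ae_mono (Measure.restrict_mono (Icc_subset_Icc hsb.1 le_rfl) le_rfl)), ?_⟩
      rw [hgeq, ← hI₂def, ← EReal.coe_add]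
    -- lower bound on J from the affine minorant
    have hJlb : τ n * (F (v n) + β - δ) ≤ J := by
      have hIccsub : Icc t₀ s ⊆ Icc t₀ b := Icc_subset_Icc le_rfl hsb.2
      have hIccT : Icc t₀ s ⊆ Icc t₀ T := Icc_subset_Icc le_rfl hsT'
      have hvel' : ∀ᵐ t ∂(volume.restrict (Icc t₀ s)), ‖X' n t‖ ≤ C :=
        (hbounds n).2.filter_mono (ae_mono (Measure.restrict_mono hIccsub le_rfl))
      have hLeq : ∀ᵐ t ∂(volume.restrict (Icc t₀ s)),
          L t (X n t) (X' n t) = ((ℓf n t : ℝ) : EReal) :=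
        (haen n).filter_mono (ae_mono (Measure.restrict_mono hIccT le_rfl))
      have hmemae : ∀ᵐ t ∂(volume.restrict (Icc t₀ s)), t ∈ Icc t₀ s :=
        ae_restrict_mem measurableSet_Icc
      have haeineq : ∀ᵐ t ∂(volume.restrict (Icc t₀ s)),
          F (X' n t) + (β - δ) ≤ ℓf n t := by
        filter_upwards [hvel', hLeq, hmemae] with t h1 h2 h3
        have htmτ : t - t₀ ≤ τ n := by
          have := h3.2
          rw [hs_def] at this
          linarith
        have ht0T : t ∈ Icc (0:ℝ) T := ⟨le_trans ht₀0 h3.1, le_trans h3.2 hsT'⟩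
        have habs : |t - t₀| < η := by
          rw [abs_of_nonneg (by linarith [h3.1])]
          linarith
        have hxd : ‖X n t - x₀‖ < η := by
          have hb1 : ‖X n t - x₀‖ ≤ C * (t - t₀) := (hbounds n).1 t (hIccsub h3)
          have hb2 : C * (t - t₀) ≤ C * τ n := mul_le_mul_of_nonneg_left htmτ hC0
          linarith
        have h4 := hη t ht0T (X n t) (X' n t) habs hxd h1
        rw [h2] at h4
        have h5 : F (X' n t) + β - δ ≤ ℓf n t := EReal.coe_le_coe_iff.mp h4
        linarith
      have hX'int : IntegrableOn (X' n) (Icc t₀ s) := (hACn n).1.mono_set hIccT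
      have hintF : IntegrableOn (fun t => F (X' n t) + (β - δ)) (Icc t₀ s) :=
        (F.integrable_comp hX'int).add (integrableOn_const measure_Icc_lt_top.ne)
      have hintl : IntegrableOn (ℓf n) (Icc t₀ s) := (hintn n).mono_set hIccT
      have hmono := integral_mono_ae hintF hintl haeineq
      have hXint : ∫ t in Icc t₀ s, X' n t = X n s - x₀ := by
        have h1 := (hACn n).2.2 s ⟨by linarith, hsT'⟩
        rw [h1, hx0n n, intervalIntegral.integral_of_le (by linarith : t₀ ≤ s),
          ← integral_Icc_eq_integral_Ioc]
        abel
      have hLHS : ∫ t in Icc t₀ s, (F (X' n t) + (β - δ)) =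
          τ n * F (v n) + (β - δ) * τ n := by
        rw [integral_add (F.integrable_comp hX'int)
          (integrableOn_const measure_Icc_lt_top.ne)]
        rw [F.integral_comp_comm hX'int, hXint]
        rw [setIntegral_const, smul_eq_mul, Real.volume_real_Icc_of_le (by linarith [hτpos n] : t₀ ≤ s)]
        have h2 : X n s - x₀ = τ n • v n := (hτvn n).symm
        rw [h2, F.map_smul, smul_eq_mul]
        have h3 : s - t₀ = τ n := by rw [hs_def]; ring
        rw [h3]
        ring
      rw [hLHS] at hmono
      rw [← hJdef] at hmono
      nlinarith [hmono]
    -- assemble the chain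
    have hchain : valueFun T L g (s, X n s) ≤
        ((V₀ + (τ n)^2 - τ n * (F (v n) + β - δ) : ℝ) : EReal) := by
      refine le_trans hVs ?_
      apply EReal.coe_le_coe_iff.mpr
      linarith
    rw [hpt, hV₀]
    have hsub : valueFun T L g (s, X n s) - ((V₀ : ℝ) : EReal) ≤
        (((V₀ + (τ n)^2 - τ n * (F (v n) + β - δ)) - V₀ : ℝ) : EReal) := by
      rw [EReal.coe_sub]
      exact EReal.sub_le_sub hchain le_rfl
    refine le_trans
      (ereal_mul_le_mul_left _ (inv_nonneg.mpr (le_of_lt hτpos')) hsub) ?_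
    rw [← EReal.coe_mul]
    apply EReal.coe_le_coe_iff.mpr
    have heq : (τ n)⁻¹ * ((V₀ + (τ n)^2 - τ n * (F (v n) + β - δ)) - V₀) =
        τ n - (F (v n) + β) + δ := by
      field_simp
      ring
    rw [heq]
  -- pass to the limit along the subsequence
  have hψtop : Tendsto ψ atTop atTop := hψmono.tendsto_atTop
  have hτψ : Tendsto (τ ∘ ψ) atTop (nhdsWithin 0 (Ioi 0)) := hτ0.comp hψtop
  have hτψ0 : Tendsto (τ ∘ ψ) atTop (nhds 0) := hτψ.mono_right nhdsWithin_le_nhds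
  have hyψ : Tendsto (fun k => (((1:ℝ), v (ψ k)) : ℝ × Euc N)) atTop
      (nhds (((1:ℝ), v₀) : ℝ × Euc N)) :=
    Tendsto.prodMk_nhds tendsto_const_nhds hψtend
  apply liminf_le_along (valueFun T L g) (t₀, x₀) ((1:ℝ), v₀) (τ ∘ ψ)
    (fun k => ((1:ℝ), v (ψ k))) hτψ hyψ
  have hev1 : ∀ᶠ k in atTop, τ (ψ k) < η := hτψ0.eventually_lt_const hηpos
  have hev2 : ∀ᶠ k in atTop, C * τ (ψ k) < η := by
    have h1 : Tendsto (fun k => C * τ (ψ k)) atTop (nhds (C * 0)) := hτψ0.const_mul C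
    rw [mul_zero] at h1
    exact h1.eventually_lt_const hηpos
  have hev3 : ∀ᶠ k in atTop, τ (ψ k) < δ := hτψ0.eventually_lt_const hδpos
  have hev4 : ∀ᶠ k in atTop, ρ' < F (v (ψ k)) + β := by
    have h1 : Tendsto (fun k => F (v (ψ k)) + β) atTop (nhds (F v₀ + β)) :=
      Tendsto.add_const β ((F.continuous.tendsto v₀).comp hψtend)
    exact h1.eventually_const_lt hval
  filter_upwards [hev1, hev2, hev3, hev4] with k h1 h2 h3 h4
  refine le_trans (hkey (ψ k) h1 h2) ?_
  apply EReal.coe_le_coe_iff.mpr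
  rw [hδ_def]
  linarith


end
end
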